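/- In a sealed-bid second-price auction with a single indivisible good, n bidders with private values v_i, where the highest bidder wins and pays the second-highest bid (utility v_i minus payment if winning, 0 otherwise), bidding one's true value b_i = v_i is a weakly dominant strategy: for every bidder i, every bid b, and every profile of opponents' bids, the utility from bidding v_i is at least the utility from bidding b. -/
import Mathlib

/-- Utility of a bidder with value `v` bidding `b` in a second-price auction,
where `M` is the maximum of the opponents' bids: she wins iff her bid strictly
exceeds `M` (she loses ties), and if she wins she pays `M`. -/
noncomputable def secondPriceUtility (v b M : ℝ) : ℝ := if M < b then v - M else 0

/-- In a sealed-bid second-price auction, bidding one's true value is weakly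
dominant: for every value `v`, every alternative bid `b`, and every profile of
opponents' bids (a nonempty family `opp`), the utility from bidding `v` is at
least the utility from bidding `b`. -/
theorem second_price_truthful_weakly_dominant
    (v b : ℝ) (n : ℕ) (opp : Fin (n + 1) → ℝ) :
    secondPriceUtility v b (Finset.univ.sup' Finset.univ_nonempty opp) ≤
      secondPriceUtility v v (Finset.univ.sup' Finset.univ_nonempty opp) := by
  set M := Finset.univ.sup' Finset.univ_nonempty opp
  unfold secondPriceUtility
  split <;> split <;> rename_i h1 h2 <;> try linarith
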